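/- Let m and n both be odd, and let R ∈ ℤ^m, S ∈ ℤ^n be initially nonincreasing, palindromic nonnegative integer vectors with equal component sums, every component of R at most n, every component of S at most m, and with r_⌈m/2⌉ and s_⌈n/2⌉ of the same parity. Let R' ∈ ℤ^{m−1} be obtained from R by deleting r_⌈m/2⌉ and then decreasing by 1 its first ⌊s_⌈n/2⌉/2⌋ and last ⌊s_⌈n/2⌉/2⌋ components, and let S' ∈ ℤ^{n−1} be obtained from S by deleting s_⌈n/2⌉ and then decreasing by 1 its first ⌊r_⌈m/2⌉/2⌋ and last ⌊r_⌈m/2⌉/2⌋ components. Then there exists an m×n (0,1)-matrix with row sum vector R, column sum vector S, and invariant under ρ_π if and only if there exists an (m−1)×(n−1) (0,1)-matrix with row sum vector R', column sum vector S', and invariant under ρ_π. -/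

import Mathlib

/-!
The middle row of a ρ_π-invariant (0,1)-matrix is palindromic, so if its sum is `2t + c` with
`c ∈ {0, 1}`, its central entry is `c` and its left half holds `t` ones. If one of the first `t`
entries is `0` (column `j₀`) while a later entry `j` of the left half is `1`, then `s_j ≤ s_{j₀}`
forces a row `i` with `1` in column `j₀` and `0` in column `j`; the interchange on rows
`mid, i` and columns `j, j₀`, together with its ρ_π-image, stays in the class, keeps the middle
column and fills the hole. So the middle row may be taken to be `1^t 0⋯0 c 0⋯0 1^t`, and, by
transposing, the middle column as well; deleting both lines leaves a matrix with row and column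
sums `R'`, `S'`. Conversely, bordering a matrix of that class by these two lines gives back the
row and column sums `R`, `S`.
-/

open Finset Matrix

namespace Centrosymmetric

section Lines

variable {k l : ℕ}

structure IsCentroZeroOne (A : Matrix (Fin k) (Fin l) ℤ) (R : Fin k → ℤ)
    (S : Fin l → ℤ) : Prop where
  zero_or_one : ∀ i j, A i j = 0 ∨ A i j = 1
  row_sum : ∀ i, ∑ j, A i j = R i
  col_sum : ∀ j, ∑ i, A i j = S j
  centrosymm : ∀ i j, A i j = A i.rev j.rev

variable {A : Matrix (Fin k) (Fin l) ℤ} {R : Fin k → ℤ} {S : Fin l → ℤ}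

lemma isCentroZeroOne_iff :
    IsCentroZeroOne A R S ↔ (∀ i j, A i j = 0 ∨ A i j = 1) ∧ (∀ i, ∑ j, A i j = R i) ∧
      (∀ j, ∑ i, A i j = S j) ∧ ∀ i j, A i j = A i.rev j.rev :=
  ⟨fun ⟨h₁, h₂, h₃, h₄⟩ => ⟨h₁, h₂, h₃, h₄⟩, fun ⟨h₁, h₂, h₃, h₄⟩ => ⟨h₁, h₂, h₃, h₄⟩⟩

lemma IsCentroZeroOne.transpose (hA : IsCentroZeroOne A R S) : IsCentroZeroOne Aᵀ S R :=
  ⟨fun j i => hA.zero_or_one i j, hA.col_sum, hA.row_sum, fun j i => hA.centrosymm i j⟩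

def interchange (i i' : Fin k) (j j' : Fin l) : Matrix (Fin k) (Fin l) ℤ :=
  vecMulVec (Pi.single i 1 - Pi.single i' 1) (Pi.single j 1 - Pi.single j' 1)

lemma sum_single_sub_single {n : ℕ} (j j' : Fin n) :
    ∑ y, (Pi.single j (1 : ℤ) - Pi.single j' 1 : Fin n → ℤ) y = 0 := by
  simp [sum_sub_distrib]

lemma sum_interchange_row (i i' : Fin k) (j j' : Fin l) (x : Fin k) :
    ∑ y, interchange i i' j j' x y = 0 := by
  simp only [interchange, vecMulVec_apply, ← mul_sum, sum_single_sub_single, mul_zero]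

lemma sum_interchange_col (i i' : Fin k) (j j' : Fin l) (y : Fin l) :
    ∑ x, interchange i i' j j' x y = 0 := by
  simp only [interchange, vecMulVec_apply, ← sum_mul, sum_single_sub_single, zero_mul]

lemma interchange_rev (i i' : Fin k) (j j' : Fin l) (x : Fin k) (y : Fin l) :
    interchange i i' j j' x.rev y.rev = interchange i.rev i'.rev j.rev j'.rev x y := by
  simp [interchange, vecMulVec_apply, Pi.single_apply, Fin.rev_eq_iff]

lemma zero_or_one_sub_interchange (hA : ∀ x y, A x y = 0 ∨ A x y = 1) {i i' : Fin k} {j j' : Fin l} (hi : i ≠ i')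
    (hj : j ≠ j') (h₁ : A i j = 1) (h₂ : A i' j' = 1) (h₃ : A i j' = 0) (h₄ : A i' j = 0)
    (x : Fin k) (y : Fin l) :
    (A - interchange i i' j j') x y = 0 ∨ (A - interchange i i' j j') x y = 1 := by
  simp only [Matrix.sub_apply, interchange, vecMulVec_apply, Pi.sub_apply, Pi.single_apply]
  rcases hA x y with h | h <;> split_ifs <;> subst_vars <;> simp_all

lemma exists_row_of_col_sum_le (h01 : ∀ x y, A x y = 0 ∨ A x y = 1) {p : Fin k} {j j' : Fin l}
    (hle : ∑ x, A x j ≤ ∑ x, A x j') (hp : A p j = 1) (hp' : A p j' = 0) :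
    ∃ i ≠ p, A i j = 0 ∧ A i j' = 1 := by
  by_contra! h
  have herase : ∑ x ∈ univ.erase p, A x j' ≤ ∑ x ∈ univ.erase p, A x j := by
    refine sum_le_sum fun x hx => ?_
    have := h x (ne_of_mem_erase hx)
    rcases h01 x j with h₁ | h₁ <;> rcases h01 x j' with h₂ | h₂ <;> simp_all
  rw [← add_sum_erase _ _ (mem_univ p), ← add_sum_erase _ _ (mem_univ p)] at hle
  omega

end Lines

section Middle

variable {a b t : ℕ}

def mid (a : ℕ) : Fin (2 * a + 1) := ⟨a, by omega⟩

@[simp] lemma val_mid : (mid a : ℕ) = a := rfl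

@[simp] lemma rev_mid : (mid a).rev = mid a := Fin.ext (by simp [mid]; omega)

lemma val_succAbove_mid (j : Fin (2 * a)) :
    ((mid a).succAbove j : ℕ) = if (j : ℕ) < a then (j : ℕ) else (j : ℕ) + 1 := by
  simp only [Fin.succAbove, Fin.lt_def, Fin.val_castSucc, mid]
  split_ifs <;> simp

@[simp] lemma rev_succAbove_mid (j : Fin (2 * a)) :
    ((mid a).succAbove j).rev = (mid a).succAbove j.rev := by
  rw [Fin.rev_succAbove, rev_mid]

lemma rev_ne_self {x : Fin (2 * a + 1)} (hx : x ≠ mid a) : x.rev ≠ x := by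
  simp only [ne_eq, Fin.ext_iff, Fin.val_rev, val_mid] at *
  omega

lemma rev_ne_mid {x : Fin (2 * a + 1)} (hx : x ≠ mid a) : x.rev ≠ mid a := by
  simpa [Fin.rev_eq_iff] using hx

lemma rev_ne_of_lt_mid {y y' : Fin (2 * a + 1)} (hy : y < mid a) (hy' : y' ≤ mid a) :
    y.rev ≠ y' := by
  rw [Fin.lt_def] at hy
  rw [Fin.le_def] at hy'
  simp only [ne_eq, Fin.ext_iff, Fin.val_rev, val_mid] at *
  omega

def ends (n t : ℕ) (j : Fin n) : ℤ := if (j : ℕ) < t ∨ n - t ≤ j then 1 else 0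

lemma ends_eq_zero_or_one {n : ℕ} (j : Fin n) : ends n t j = 0 ∨ ends n t j = 1 := by
  unfold ends
  split_ifs <;> simp

@[simp] lemma ends_rev {n : ℕ} (j : Fin n) : ends n t j.rev = ends n t j := by
  have := j.isLt
  simp only [ends, Fin.val_rev]
  congr 1
  apply propext
  omega

lemma sum_ends {n : ℕ} (h : 2 * t ≤ n) : ∑ j : Fin n, ends n t j = 2 * t := by
  have hsplit (j : Fin n) : ends n t j
      = (if (j : ℕ) < t then 1 else 0) + (if (j.rev : ℕ) < t then 1 else 0) := by
    have := j.isLt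
    simp only [ends, Fin.val_rev]
    split_ifs <;> omega
  have hlow : ∑ j : Fin n, (if (j : ℕ) < t then (1 : ℤ) else 0) = t := by
    simp [sum_boole, Fin.card_filter_val_lt, min_eq_right (by omega : t ≤ n)]
  have hhigh : ∑ j : Fin n, (if (j.rev : ℕ) < t then (1 : ℤ) else 0) = t :=
    (Fintype.sum_bijective _ Fin.rev_bijective _ _ fun _ => rfl).trans hlow
  rw [sum_congr rfl fun j _ => hsplit j, sum_add_distrib, hlow, hhigh]
  ring

def middleLine (b t : ℕ) (c : ℤ) : Fin (2 * b + 1) → ℤ :=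
  Fin.insertNth (mid b) c (ends (2 * b) t)

lemma sum_middleLine (c : ℤ) (ht : t ≤ b) : ∑ y, middleLine b t c y = 2 * t + c := by
  rw [middleLine, Fin.sum_insertNth, sum_ends (by omega)]
  ring

end Middle

section Halves

variable {b t : ℕ} {v : Fin (2 * b + 1) → ℤ}

lemma sum_eq_two_mul_sum_Iio_mid_add (hv : ∀ y, v y.rev = v y) :
    ∑ y, v y = 2 * ∑ y ∈ Iio (mid b), v y + v (mid b) := by
  have hIoi : ∑ y ∈ Ioi (mid b), v y = ∑ y ∈ Iio (mid b), v y := by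
    conv_lhs => rw [← rev_mid, ← Fin.map_revPerm_Iio, sum_map]
    simp [hv]
  rw [← sum_filter_add_sum_filter_not univ (· < mid b), filter_gt_eq_Iio]
  simp only [not_lt, filter_le_eq_Ici, ← sum_Ioi_add_eq_sum_Ici, hIoi]
  ring

def holes {n : ℕ} (v : Fin n → ℤ) (t : ℕ) : Finset (Fin n) := {y | (y : ℕ) < t ∧ v y = 0}

lemma sum_misplaced_eq_card_holes (h01 : ∀ y, v y = 0 ∨ v y = 1) (ht : t ≤ b)
    (hsum : ∑ y ∈ Iio (mid b), v y = t) :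
    ∑ y ∈ Iio (mid b) with t ≤ Fin.val y, v y = #(holes v t) := by
  have hsplit : ∑ y ∈ Iio (mid b), v y
      = ∑ y : Fin (2 * b + 1) with Fin.val y < t, v y
        + ∑ y ∈ Iio (mid b) with t ≤ Fin.val y, v y := by
    rw [← sum_filter_add_sum_filter_not (Iio (mid b)) (fun y => (y : ℕ) < t)]
    simp only [not_lt]
    congr 2
    ext y
    simp only [mem_filter, mem_Iio, mem_univ, true_and, Fin.lt_def, mid]
    omega
  have hlow : ∑ y : Fin (2 * b + 1) with Fin.val y < t, v y + #(holes v t) = t := by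
    have hv (y : Fin (2 * b + 1)) : v y = 1 - if v y = 0 then 1 else 0 := by
      rcases h01 y with h | h <;> simp [h]
    rw [sum_congr rfl fun y _ => hv y, sum_sub_distrib, sum_boole, filter_filter, holes]
    simp [Fin.card_filter_val_lt, min_eq_right (by omega : t ≤ 2 * b + 1)]
  omega

lemma sum_Iio_mid_eq_and_mid_eq (h01 : ∀ y, v y = 0 ∨ v y = 1) (hv : ∀ y, v y.rev = v y)
    {c : ℤ} (hc : c = 0 ∨ c = 1) (hsum : ∑ y, v y = 2 * t + c) :
    ∑ y ∈ Iio (mid b), v y = t ∧ v (mid b) = c := by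
  rw [sum_eq_two_mul_sum_Iio_mid_add hv] at hsum
  rcases h01 (mid b) with h | h <;> omega

lemma exists_misplaced_one (h01 : ∀ y, v y = 0 ∨ v y = 1) (ht : t ≤ b)
    (hsum : ∑ y ∈ Iio (mid b), v y = t) (hne : (holes v t).Nonempty) :
    ∃ j < mid b, t ≤ (j : ℕ) ∧ v j = 1 := by
  have hpos : ∑ y ∈ Iio (mid b) with t ≤ Fin.val y, v y ≠ 0 := by
    rw [sum_misplaced_eq_card_holes h01 ht hsum]
    exact_mod_cast hne.card_pos.ne'
  obtain ⟨j, hj, hj0⟩ := exists_ne_zero_of_sum_ne_zero hpos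
  simp only [mem_filter, mem_Iio] at hj
  exact ⟨j, hj.1, hj.2, (h01 j).resolve_left hj0⟩

lemma eq_ite_of_holes_eq_empty (h01 : ∀ y, v y = 0 ∨ v y = 1) (ht : t ≤ b)
    (hsum : ∑ y ∈ Iio (mid b), v y = t) (hempty : holes v t = ∅) (y : Fin (2 * b + 1))
    (hy : y < mid b) : v y = if (y : ℕ) < t then 1 else 0 := by
  split_ifs with hyt
  · refine (h01 y).resolve_left fun h => ?_
    have hhole : y ∈ holes v t := by simp [holes, hyt, h]
    simp [hempty] at hhole
  · have hzero := sum_misplaced_eq_card_holes h01 ht hsum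
    rw [hempty, card_empty, Nat.cast_zero,
      sum_eq_zero_iff_of_nonneg fun y _ => by rcases h01 y with h | h <;> simp [h]] at hzero
    exact hzero y (by simp [hy]; omega)

lemma eq_middleLine {c : ℤ} (hv : ∀ y, v y.rev = v y) (ht : t ≤ b) (hmid : v (mid b) = c)
    (hlow : ∀ y < mid b, v y = if (y : ℕ) < t then 1 else 0) : v = middleLine b t c := by
  have hlow' (j : Fin (2 * b)) (hj : (j : ℕ) < b) : v ((mid b).succAbove j) = ends (2 * b) t j := by
    rw [hlow _ (by rw [Fin.lt_def, val_succAbove_mid, if_pos hj]; exact hj), ends,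
      val_succAbove_mid, if_pos hj]
    have := Nat.add_lt_add_of_lt_of_le hj ht
    congr 1
    apply propext
    omega
  funext y
  rcases Fin.eq_self_or_eq_succAbove (mid b) y with rfl | ⟨j, rfl⟩
  · simp [middleLine, hmid]
  · rw [middleLine, Fin.insertNth_apply_succAbove]
    rcases lt_or_ge (j : ℕ) b with hj | hj
    · exact hlow' j hj
    · rw [← hv, rev_succAbove_mid, hlow' j.rev (by simp; omega), ends_rev]

end Halves

section Normalize

variable {a b t : ℕ} {R : Fin (2 * a + 1) → ℤ} {S : Fin (2 * b + 1) → ℤ}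
  {A : Matrix (Fin (2 * a + 1)) (Fin (2 * b + 1)) ℤ}

lemma IsCentroZeroOne.middle_row_rev (hA : IsCentroZeroOne A R S) (y : Fin (2 * b + 1)) :
    A (mid a) y.rev = A (mid a) y := by
  simpa using (hA.centrosymm (mid a) y).symm

lemma IsCentroZeroOne.sub_interchange_mid (hA : IsCentroZeroOne A R S) {i : Fin (2 * a + 1)}
    {j j' : Fin (2 * b + 1)} (hi : i ≠ mid a) (hj : j < mid b) (hj' : j' < mid b)
    (hjj' : j ≠ j') (h₁ : A (mid a) j = 1) (h₂ : A i j' = 1) (h₃ : A (mid a) j' = 0)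
    (h₄ : A i j = 0) :
    IsCentroZeroOne (A - interchange (mid a) i j j' - interchange (mid a) i.rev j.rev j'.rev)
      R S := by
  have hirev := rev_ne_mid hi
  have hii := rev_ne_self hi
  constructor
  · refine zero_or_one_sub_interchange (zero_or_one_sub_interchange hA.zero_or_one hi.symm hjj'
      h₁ h₂ h₃ h₄) hirev.symm (by simpa using hjj') ?_ ?_ ?_ ?_ <;>
    simp [interchange, vecMulVec_apply, hii, rev_ne_of_lt_mid, hj, hj', hj.le, hj'.le,
      hA.middle_row_rev, ← hA.centrosymm i, h₁, h₂, h₃, h₄]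
  · intro x
    simp [sum_sub_distrib, sum_interchange_row, hA.row_sum]
  · intro y
    simp [sum_sub_distrib, sum_interchange_col, hA.col_sum]
  · intro x y
    simp only [Matrix.sub_apply, interchange_rev, rev_mid, Fin.rev_rev, ← hA.centrosymm]
    exact sub_right_comm _ _ _

lemma IsCentroZeroOne.exists_holes_ssubset (hA : IsCentroZeroOne A R S)
    (hS : AntitoneOn S (Set.Iio (mid b))) (ht : t ≤ b)
    (hsum : ∑ y ∈ Iio (mid b), A (mid a) y = t) (hne : (holes (A (mid a)) t).Nonempty) :
    ∃ B, IsCentroZeroOne B R S ∧ (∀ x, B x (mid b) = A x (mid b)) ∧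
      holes (B (mid a)) t ⊂ holes (A (mid a)) t := by
  obtain ⟨j, hj, htj, hj₁⟩ := exists_misplaced_one (hA.zero_or_one _) ht hsum hne
  obtain ⟨j', hj'⟩ := hne
  have hj'A : (j' : ℕ) < t ∧ A (mid a) j' = 0 := by simpa [holes] using hj'
  have hj'j : j' < j := Fin.lt_def.2 (by omega)
  have hj'mid : j' < mid b := hj'j.trans hj
  obtain ⟨i, hi, hij, hij'⟩ := exists_row_of_col_sum_le hA.zero_or_one
    (by rw [hA.col_sum, hA.col_sum]; exact hS hj'mid hj hj'j.le) hj₁ hj'A.2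
  have hB := hA.sub_interchange_mid hi hj hj'mid hj'j.ne' hj₁ hij' hj'A.2 hij
  have hirev := rev_ne_mid hi
  refine ⟨_, hB, fun x => ?_, ?_⟩
  · simp [interchange, vecMulVec_apply, hj.ne', hj'mid.ne', (rev_ne_of_lt_mid hj le_rfl).symm,
      (rev_ne_of_lt_mid hj'mid le_rfl).symm]
  have hrow (y : Fin (2 * b + 1)) (hy : (y : ℕ) < t) :
      (A - interchange (mid a) i j j' - interchange (mid a) i.rev j.rev j'.rev) (mid a) y
        = A (mid a) y + (Pi.single j' 1 : Fin (2 * b + 1) → ℤ) y := by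
    have hymid : y < mid b := Fin.lt_def.2 (by simp; omega)
    have hyj : y ≠ j := fun h => by subst h; omega
    simp [interchange, vecMulVec_apply, hi.symm, hirev.symm, hyj,
      (rev_ne_of_lt_mid hj hymid.le).symm, (rev_ne_of_lt_mid hj'mid hymid.le).symm]
  rw [ssubset_iff_of_subset]
  · refine ⟨j', hj', fun h => ?_⟩
    simp only [holes, mem_filter, mem_univ, true_and] at h
    rw [hrow j' hj'A.1, hj'A.2, Pi.single_eq_same] at h
    exact one_ne_zero h.2
  · intro y hy
    simp only [holes, mem_filter, mem_univ, true_and] at hy ⊢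
    rw [hrow y hy.1, Pi.single_apply] at hy
    refine ⟨hy.1, ?_⟩
    rcases hA.zero_or_one (mid a) y with h | h <;> split_ifs at hy <;> omega

theorem IsCentroZeroOne.exists_middle_row_eq (hA : IsCentroZeroOne A R S)
    (hS : AntitoneOn S (Set.Iio (mid b))) {c : ℤ} (hc : c = 0 ∨ c = 1)
    (hR : R (mid a) = 2 * t + c) (ht : t ≤ b) :
    ∃ B, IsCentroZeroOne B R S ∧ B (mid a) = middleLine b t c ∧
      ∀ x, B x (mid b) = A x (mid b) := by
  induction hk : #(holes (A (mid a)) t) using Nat.strong_induction_on generalizing A with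
  | _ k ih =>
  obtain ⟨hsum, hmid⟩ := sum_Iio_mid_eq_and_mid_eq (hA.zero_or_one _) hA.middle_row_rev hc
    (hR ▸ hA.row_sum _)
  rcases (holes (A (mid a)) t).eq_empty_or_nonempty with hempty | hne
  · exact ⟨A, hA, eq_middleLine hA.middle_row_rev ht hmid
      (eq_ite_of_holes_eq_empty (hA.zero_or_one _) ht hsum hempty), fun _ => rfl⟩
  · obtain ⟨B, hB, hBcol, hss⟩ := hA.exists_holes_ssubset hS ht hsum hne
    obtain ⟨C, hC, hCrow, hCcol⟩ := ih _ (hk ▸ card_lt_card hss) hB rfl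
    exact ⟨C, hC, hCrow, fun x => (hCcol x).trans (hBcol x)⟩

end Normalize

section Reduce

variable {a b t u : ℕ} {c : ℤ} {R : Fin (2 * a + 1) → ℤ} {S : Fin (2 * b + 1) → ℤ}

/-- The paper's `R'`, for `u = ⌊s_{⌈n/2⌉}/2⌋`. -/
def reduced (R : Fin (2 * a + 1) → ℤ) (u : ℕ) (i : Fin (2 * a)) : ℤ :=
  R ((mid a).succAbove i) - ends (2 * a) u i

lemma IsCentroZeroOne.submatrix_succAbove_mid {M : Matrix (Fin (2 * a + 1)) (Fin (2 * b + 1)) ℤ}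
    (hM : IsCentroZeroOne M R S) (hrow : M (mid a) = middleLine b t c)
    (hcol : ∀ x, M x (mid b) = middleLine a u c x) :
    IsCentroZeroOne (M.submatrix (mid a).succAbove (mid b).succAbove) (reduced R u)
      (reduced S t) := by
  constructor
  · exact fun i j => hM.zero_or_one _ _
  · intro i
    have := hM.row_sum ((mid a).succAbove i)
    rw [Fin.sum_univ_succAbove _ (mid b), hcol, middleLine, Fin.insertNth_apply_succAbove] at this
    simp only [submatrix_apply, reduced, ← this, add_sub_cancel_left]
  · intro j
    have := hM.col_sum ((mid b).succAbove j)
    rw [Fin.sum_univ_succAbove _ (mid a), hrow, middleLine, Fin.insertNth_apply_succAbove] at this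
    simp only [submatrix_apply, reduced, ← this, add_sub_cancel_left]
  · intro i j
    simp [hM.centrosymm ((mid a).succAbove i)]

def insertMiddle (A' : Matrix (Fin (2 * a)) (Fin (2 * b)) ℤ) (t u : ℕ) (c : ℤ) :
    Matrix (Fin (2 * a + 1)) (Fin (2 * b + 1)) ℤ :=
  Matrix.of <| Fin.insertNth (α := fun _ => Fin (2 * b + 1) → ℤ) (mid a) (middleLine b t c)
    fun i => Fin.insertNth (mid b) (ends (2 * a) u i) (A' i)

section InsertMiddle

variable (A' : Matrix (Fin (2 * a)) (Fin (2 * b)) ℤ) (t u : ℕ) (c : ℤ)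

@[simp] lemma insertMiddle_mid (y : Fin (2 * b + 1)) :
    insertMiddle A' t u c (mid a) y = middleLine b t c y := by
  simp [insertMiddle]

@[simp] lemma insertMiddle_succAbove_mid (i : Fin (2 * a)) :
    insertMiddle A' t u c ((mid a).succAbove i) (mid b) = ends (2 * a) u i := by
  simp [insertMiddle]

@[simp] lemma insertMiddle_succAbove_succAbove (i : Fin (2 * a)) (j : Fin (2 * b)) :
    insertMiddle A' t u c ((mid a).succAbove i) ((mid b).succAbove j) = A' i j := by
  simp [insertMiddle]

end InsertMiddle

lemma isCentroZeroOne_insertMiddle {A' : Matrix (Fin (2 * a)) (Fin (2 * b)) ℤ}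
    (hA' : IsCentroZeroOne A' (reduced R u) (reduced S t)) (hc : c = 0 ∨ c = 1)
    (hR : R (mid a) = 2 * t + c) (hS : S (mid b) = 2 * u + c) (ht : t ≤ b) (hu : u ≤ a) :
    IsCentroZeroOne (insertMiddle A' t u c) R S := by
  constructor
  · intro x y
    rcases Fin.eq_self_or_eq_succAbove (mid a) x with rfl | ⟨i, rfl⟩ <;>
    rcases Fin.eq_self_or_eq_succAbove (mid b) y with rfl | ⟨j, rfl⟩ <;>
    simp [middleLine, hc, hA'.zero_or_one, ends_eq_zero_or_one]
  · intro x
    rcases Fin.eq_self_or_eq_succAbove (mid a) x with rfl | ⟨i, rfl⟩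
    · simp [sum_middleLine c ht, hR]
    · simp [Fin.sum_univ_succAbove _ (mid b), hA'.row_sum, reduced]
  · intro y
    rw [Fin.sum_univ_succAbove _ (mid a)]
    rcases Fin.eq_self_or_eq_succAbove (mid b) y with rfl | ⟨j, rfl⟩
    · simp [middleLine, sum_ends (by omega : 2 * u ≤ 2 * a), hS]
      ring
    · simp [middleLine, hA'.col_sum, reduced]
  · intro x y
    rcases Fin.eq_self_or_eq_succAbove (mid a) x with rfl | ⟨i, rfl⟩ <;>
    rcases Fin.eq_self_or_eq_succAbove (mid b) y with rfl | ⟨j, rfl⟩ <;>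
    simp [middleLine, ← hA'.centrosymm]

lemma reduced_eq_ite (R : Fin (2 * a + 1) → ℤ) (u : ℕ) :
    reduced R u = fun i : Fin (2 * a + 1 - 1) =>
      (if (i : ℕ) < (2 * a + 1) / 2 then R ⟨i.val, by omega⟩ else R ⟨i.val + 1, by omega⟩) -
        (if (i : ℕ) < u ∨ 2 * a + 1 - 1 - u ≤ (i : ℕ) then 1 else 0) := by
  funext i
  simp only [reduced, ends, Nat.add_sub_cancel]
  congr 1
  split_ifs <;> congr 1 <;> ext <;> simp [val_succAbove_mid] <;> omega

end Reduce

theorem exists_isCentroZeroOne_iff_reduced {a b t u : ℕ} {c : ℤ} {R : Fin (2 * a + 1) → ℤ}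
    {S : Fin (2 * b + 1) → ℤ} (hRanti : AntitoneOn R (Set.Iio (mid a)))
    (hSanti : AntitoneOn S (Set.Iio (mid b))) (hc : c = 0 ∨ c = 1)
    (hR : R (mid a) = 2 * t + c) (hS : S (mid b) = 2 * u + c) (ht : t ≤ b) (hu : u ≤ a) :
    (∃ A, IsCentroZeroOne A R S) ↔ ∃ A', IsCentroZeroOne A' (reduced R u) (reduced S t) := by
  constructor
  · rintro ⟨A, hA⟩
    obtain ⟨B, hB, hBrow, -⟩ := hA.exists_middle_row_eq hSanti hc hR ht
    obtain ⟨C, hC, hCrow, hCcol⟩ := hB.transpose.exists_middle_row_eq hRanti hc hS hu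
    exact ⟨_, hC.transpose.submatrix_succAbove_mid (funext fun y => (hCcol y).trans
      (congrFun hBrow y)) (congrFun hCrow)⟩
  · rintro ⟨A', hA'⟩
    exact ⟨_, isCentroZeroOne_insertMiddle hA' hc hR hS ht hu⟩

end Centrosymmetric

open Centrosymmetric in
/-- **ρ_π-invariant (0,1)-matrices, both `m` and `n` odd: reduction.**
Assume `R`, `S` are initially nonincreasing palindromic nonnegative integer
vectors with equal sums, components bounded by `n` resp. `m`, and middle
components `r_{⌈m/2⌉}`, `s_{⌈n/2⌉}` of the same parity.  With
`t = ⌊r_{⌈m/2⌉}/2⌋` and `u = ⌊s_{⌈n/2⌉}/2⌋`, the class `𝒜^π(R,S)` is nonempty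
iff `𝒜^π(R',S')` is, where `R'` deletes the middle component of `R` and then
decreases its first `u` and last `u` components by one, and `S'` deletes the
middle component of `S` and then decreases its first `t` and last `t`
components by one. -/
theorem centrosymmetric_zeroOne_odd_odd (m n : ℕ)
    (hm : m % 2 = 1) (hn : n % 2 = 1)
    (R : Fin m → ℤ) (S : Fin n → ℤ)
    (hRle : ∀ i, R i ≤ n) (hSle : ∀ j, S j ≤ m)
    (hRmono : ∀ i j : Fin m, i ≤ j → (j : ℕ) < m / 2 → R j ≤ R i)
    (hSmono : ∀ i j : Fin n, i ≤ j → (j : ℕ) < n / 2 → S j ≤ S i)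
    (hpar : R ⟨m / 2, by omega⟩ % 2 = S ⟨n / 2, by omega⟩ % 2)
    (t u : ℕ)
    (ht : (t : ℤ) = R ⟨m / 2, by omega⟩ / 2)
    (hu : (u : ℤ) = S ⟨n / 2, by omega⟩ / 2) :
    (∃ A : Matrix (Fin m) (Fin n) ℤ,
        (∀ i j, A i j = 0 ∨ A i j = 1) ∧
        (∀ i, ∑ j, A i j = R i) ∧
        (∀ j, ∑ i, A i j = S j) ∧
        (∀ i j, A i j = A i.rev j.rev)) ↔
    (∃ A' : Matrix (Fin (m - 1)) (Fin (n - 1)) ℤ,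
        (∀ i j, A' i j = 0 ∨ A' i j = 1) ∧
        (∀ i : Fin (m - 1), ∑ j, A' i j =
          (if (i : ℕ) < m / 2 then R ⟨i.val, by have := i.isLt; omega⟩
            else R ⟨i.val + 1, by have := i.isLt; omega⟩) -
          (if (i : ℕ) < u ∨ m - 1 - u ≤ (i : ℕ) then 1 else 0)) ∧
        (∀ j : Fin (n - 1), ∑ i, A' i j =
          (if (j : ℕ) < n / 2 then S ⟨j.val, by have := j.isLt; omega⟩
            else S ⟨j.val + 1, by have := j.isLt; omega⟩) -
          (if (j : ℕ) < t ∨ n - 1 - t ≤ (j : ℕ) then 1 else 0)) ∧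
        (∀ i j, A' i j = A' i.rev j.rev)) := by
  obtain ⟨a, rfl⟩ : ∃ a, m = 2 * a + 1 := ⟨m / 2, by omega⟩
  obtain ⟨b, rfl⟩ : ∃ b, n = 2 * b + 1 := ⟨n / 2, by omega⟩
  have hmidR : (⟨(2 * a + 1) / 2, by omega⟩ : Fin (2 * a + 1)) = mid a := Fin.ext (by simp; omega)
  have hmidS : (⟨(2 * b + 1) / 2, by omega⟩ : Fin (2 * b + 1)) = mid b := Fin.ext (by simp; omega)
  rw [hmidR] at hpar ht
  rw [hmidS] at hpar hu
  have key := exists_isCentroZeroOne_iff_reduced (t := t) (u := u) (c := R (mid a) % 2)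
    (fun i _ j (hj : (j : ℕ) < a) hij => hRmono i j hij (by omega))
    (fun i _ j (hj : (j : ℕ) < b) hij => hSmono i j hij (by omega))
    (by omega) (by omega) (by omega) (by have := hRle (mid a); omega)
    (by have := hSle (mid b); omega)
  rw [reduced_eq_ite, reduced_eq_ite] at key
  simp only [isCentroZeroOne_iff] at key
  exact key
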